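/- Let p be a prime and ℓ ≠ p a prime. The formal power series E_2^{crit_p, crit_ℓ}(q), the critical-at-ℓ, critical-at-p refinement of E_2, is not an overconvergent p-adic modular form: otherwise E_2^{crit_p}(q), which is a linear combination of E_2^{crit_p, ord_ℓ}(q) and E_2^{crit_p, crit_ℓ}(q), would be overconvergent, contradicting the theorem of Koblitz (p = 2,3) and Coleman–Gouvêa–Jochnowitz (p ≥ 5) that E_2^{crit_p}(q) is not overconvergent. -/

import Mathlib

/-!
STATEMENT 17. Let `p` be a prime and `ℓ ≠ p` a prime.  The formal power series
`E₂^{crit_p, crit_ℓ}(q)`, the critical-at-`ℓ`, critical-at-`p` refinement of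
`E₂`, is not an overconvergent `p`-adic modular form: otherwise `E₂^{crit_p}(q)`,
which is a linear combination of `E₂^{crit_p, ord_ℓ}(q)` and
`E₂^{crit_p, crit_ℓ}(q)`, would be overconvergent, contradicting the theorem of
Koblitz (`p = 2, 3`) and Coleman–Gouvêa–Jochnowitz (`p ≥ 5`) that
`E₂^{crit_p}(q)` is not overconvergent.

The space of (`q`-expansions of) overconvergent `p`-adic modular forms of
weight `2` and level `Γ₀(ℓ) ∩ Γ₀(p)` is modeled by a predicate `Ovcg` on
`ℚ_p[[q]]` which is assumed to cut out a linear subspace, to contain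
`E₂^{crit_p, ord_ℓ}` and (Koblitz, Coleman–Gouvêa–Jochnowitz) not to contain
`E₂^{crit_p}`.
-/

noncomputable section

open PowerSeries

/-- The Eisenstein series of weight `2`:
`E₂(q) = -1/24 + ∑_{m ≥ 1} σ₁(m) qᵐ`, as a formal power series over `ℚ_p`. -/
def E₂ (p : ℕ) [Fact p.Prime] : PowerSeries ℚ_[p] :=
  PowerSeries.mk fun m => if m = 0 then -(1 / 24) else ((ArithmeticFunction.sigma 1) m : ℚ_[p])

/-- The operator `V_t` on `q`-expansions: `(V_t f)(q) = f(qᵗ)`. -/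
def Vop (p : ℕ) [Fact p.Prime] (t : ℕ) (f : PowerSeries ℚ_[p]) : PowerSeries ℚ_[p] :=
  PowerSeries.mk fun n => if t ∣ n then PowerSeries.coeff (n / t) f else 0

/-- The critical refinement at `p`: `E₂^{crit_p}(q) = E₂(q) - E₂(q^p)`. -/
def E₂critP (p : ℕ) [Fact p.Prime] : PowerSeries ℚ_[p] := E₂ p - Vop p p (E₂ p)

/-- The ordinary refinement at `ℓ`: `E₂^{ord_ℓ}(q) = E₂(q) - ℓ·E₂(q^ℓ)`. -/
def E₂ordL (p : ℕ) [Fact p.Prime] (ℓ : ℕ) : PowerSeries ℚ_[p] :=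
  E₂ p - (ℓ : ℚ_[p]) • Vop p ℓ (E₂ p)

/-- The critical refinement at `ℓ`: `E₂^{crit_ℓ}(q) = E₂(q) - E₂(q^ℓ)`. -/
def E₂critL (p : ℕ) [Fact p.Prime] (ℓ : ℕ) : PowerSeries ℚ_[p] :=
  E₂ p - Vop p ℓ (E₂ p)

/-- `E₂^{crit_p, ord_ℓ}(q) = E₂^{ord_ℓ}(q) - E₂^{ord_ℓ}(q^p)`. -/
def E₂critPordL (p : ℕ) [Fact p.Prime] (ℓ : ℕ) : PowerSeries ℚ_[p] :=
  E₂ordL p ℓ - Vop p p (E₂ordL p ℓ)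

/-- `E₂^{crit_p, crit_ℓ}(q) = E₂^{crit_ℓ}(q) - E₂^{crit_ℓ}(q^p)`. -/
def E₂critPcritL (p : ℕ) [Fact p.Prime] (ℓ : ℕ) : PowerSeries ℚ_[p] :=
  E₂critL p ℓ - Vop p p (E₂critL p ℓ)

lemma Vop_sub (p : ℕ) [Fact p.Prime] (t : ℕ) (f g : PowerSeries ℚ_[p]) :
    Vop p t (f - g) = Vop p t f - Vop p t g := by
  ext n
  simp only [Vop, coeff_mk, map_sub]
  split_ifs <;> simp

lemma Vop_smul (p : ℕ) [Fact p.Prime] (t : ℕ) (a : ℚ_[p]) (f : PowerSeries ℚ_[p]) :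
    Vop p t (a • f) = a • Vop p t f := by
  ext n
  simp only [Vop, coeff_mk, map_smul]
  split_ifs <;> simp

lemma E₂critPordL_sub_smul_E₂critPcritL (p : ℕ) [Fact p.Prime] (ℓ : ℕ) :
    E₂critPordL p ℓ - (ℓ : ℚ_[p]) • E₂critPcritL p ℓ = (1 - (ℓ : ℚ_[p])) • E₂critP p := by
  unfold E₂critPordL E₂critPcritL E₂critP E₂ordL E₂critL
  rw [Vop_sub, Vop_sub, Vop_smul]
  module

lemma mem_of_sub_smul_eq_smul {K M : Type*} [Field K] [AddCommGroup M] [Module K M]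
    (S : M → Prop) (hsub : ∀ f g : M, S f → S g → S (f - g))
    (hsmul : ∀ (a : K) (f : M), S f → S (a • f)) {f g h : M} {a c : K} (ha : a ≠ 0)
    (heq : f - c • g = a • h) (hf : S f) (hg : S g) : S h := by
  have := hsmul a⁻¹ _ (hsub _ _ hf (hsmul c _ hg))
  rwa [heq, smul_smul, inv_mul_cancel₀ ha, one_smul] at this

theorem E2_critP_critL_not_overconvergent_general
    (p ℓ : ℕ) [Fact p.Prime] (hℓ : ℓ.Prime)
    -- `Ovcg` models membership in `M₂^†(Γ₀(ℓ) ∩ Γ₀(p))`, a linear subspace of `ℚ_p[[q]]`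
    (Ovcg : PowerSeries ℚ_[p] → Prop)
    (hsub : ∀ f g : PowerSeries ℚ_[p], Ovcg f → Ovcg g → Ovcg (f - g))
    (hsmul : ∀ (a : ℚ_[p]) (f : PowerSeries ℚ_[p]), Ovcg f → Ovcg (a • f))
    -- `E₂^{crit_p, ord_ℓ}` is a classical, hence overconvergent, form
    (hord : Ovcg (E₂critPordL p ℓ))
    -- Koblitz, Coleman–Gouvêa–Jochnowitz: `E₂^{crit_p}` is not overconvergent
    (hKoblitz : ¬Ovcg (E₂critP p)) :
    ¬Ovcg (E₂critPcritL p ℓ) := by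
  intro hcrit
  have h_one_sub_ℓ : (1 : ℚ_[p]) - ℓ ≠ 0 := sub_ne_zero.mpr (Nat.cast_ne_one.mpr hℓ.ne_one).symm
  exact hKoblitz <| mem_of_sub_smul_eq_smul Ovcg hsub hsmul h_one_sub_ℓ
    (E₂critPordL_sub_smul_E₂critPcritL p ℓ) hord hcrit

/-- **`E₂^{crit_p, crit_ℓ}` is not overconvergent.**  Here `Ovcg f` means that
the formal power series `f` is the `q`-expansion of an overconvergent `p`-adic
modular form of weight `2` and level `Γ₀(ℓ) ∩ Γ₀(p)`; the space of such
`q`-expansions is a linear subspace of `ℚ_p[[q]]`, it contains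
`E₂^{crit_p, ord_ℓ}`, and by the theorem of Koblitz (`p = 2, 3`) and
Coleman–Gouvêa–Jochnowitz (`p ≥ 5`) it does not contain `E₂^{crit_p}`. -/
theorem E2_critP_critL_not_overconvergent
    (p ℓ : ℕ) [Fact p.Prime] (hℓ : ℓ.Prime) (hℓp : ℓ ≠ p)
    -- `Ovcg` models membership in `M₂^†(Γ₀(ℓ) ∩ Γ₀(p))`, a linear subspace of `ℚ_p[[q]]`
    (Ovcg : PowerSeries ℚ_[p] → Prop)
    (hsub : ∀ f g : PowerSeries ℚ_[p], Ovcg f → Ovcg g → Ovcg (f - g))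
    (hsmul : ∀ (a : ℚ_[p]) (f : PowerSeries ℚ_[p]), Ovcg f → Ovcg (a • f))
    -- `E₂^{crit_p, ord_ℓ}` is a classical, hence overconvergent, form
    (hord : Ovcg (E₂critPordL p ℓ))
    -- Koblitz, Coleman–Gouvêa–Jochnowitz: `E₂^{crit_p}` is not overconvergent
    (hKoblitz : ¬Ovcg (E₂critP p)) :
    ¬Ovcg (E₂critPcritL p ℓ) :=
  E2_critP_critL_not_overconvergent_general p ℓ hℓ Ovcg hsub hsmul hord hKoblitz
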